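/- arXiv:1910.05699 — 4 statements merged into one kernel-verified Lean document; each statement's English description precedes it below -/
import Mathlib

section
/- For any two nonzero vectors v, w ∈ ℂⁿ, the total variation distance between the distributions P_v and P_w satisfies ‖P_v − P_w‖_{TV} ≤ 2‖v − w‖ / ‖v‖. -/
/-- The ℓ² norm of a vector. -/
noncomputable def l2norm {n : Type*} [Fintype n] (v : n → ℂ) : ℝ :=
  Real.sqrt (∑ i, ‖v i‖ ^ 2)

/-- The probability distribution associated with a nonzero vector `v`:
`P_v(i) = |v_i|² / ‖v‖²`. -/
noncomputable def vecDist {n : Type*} [Fintype n] (v : n → ℂ) (i : n) : ℝ :=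
  ‖v i‖ ^ 2 / l2norm v ^ 2

/-- The total variation distance between the distributions of two vectors. -/
noncomputable def tvDist {n : Type*} [Fintype n] (v w : n → ℂ) : ℝ :=
  (1 / 2) * ∑ i, |vecDist v i - vecDist w i|

/-!
Let `a = |v| / ‖v‖` and `b = |w| / ‖w‖` be the normalized vectors of coordinate moduli, so that
`P_v(i) = a_i²` and `P_w(i) = b_i²`. By Cauchy–Schwarz,
`∑ |a_i² - b_i²| = ∑ |a_i - b_i| |a_i + b_i| ≤ ‖a - b‖ ‖a + b‖ ≤ 2 ‖a - b‖`,
and since normalization is `2 / ‖x‖`-Lipschitz at `x`,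
`‖a - b‖ ≤ 2 ‖|v| - |w|‖ / ‖v‖ ≤ 2 ‖v - w‖ / ‖v‖`.
-/

namespace NormedSpace

variable {V : Type*} [NormedAddCommGroup V] [NormedSpace ℝ V]

theorem norm_normalize_le_one (x : V) : ‖normalize x‖ ≤ 1 := by
  rcases eq_or_ne x 0 with rfl | hx
  · simp
  · exact (norm_normalize hx).le

theorem norm_normalize_sub_normalize_le {x : V} (hx : x ≠ 0) (y : V) :
    ‖normalize x - normalize y‖ ≤ 2 * ‖x - y‖ / ‖x‖ := by
  have hx' : 0 < ‖x‖ := norm_pos_iff.2 hx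
  have hsplit : normalize x - normalize y = ‖x‖⁻¹ • (x - y) + (‖x‖⁻¹ - ‖y‖⁻¹) • y := by
    simp only [normalize, smul_sub, sub_smul]; abel
  have hscale : ‖(‖x‖⁻¹ - ‖y‖⁻¹) • y‖ ≤ ‖x - y‖ / ‖x‖ := by
    rcases eq_or_ne y 0 with rfl | hy
    · simp only [norm_zero, inv_zero, sub_zero, smul_zero]
      positivity
    have hy' : 0 < ‖y‖ := norm_pos_iff.2 hy
    calc ‖(‖x‖⁻¹ - ‖y‖⁻¹) • y‖ = |‖y‖ - ‖x‖| / ‖x‖ := by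
          rw [norm_smul, Real.norm_eq_abs, inv_sub_inv hx'.ne' hy'.ne', abs_div,
            abs_of_pos (mul_pos hx' hy')]
          field_simp
      _ ≤ ‖x - y‖ / ‖x‖ := by
          gcongr
          rw [abs_sub_comm]
          exact abs_norm_sub_norm_le x y
  calc ‖normalize x - normalize y‖
      ≤ ‖‖x‖⁻¹ • (x - y)‖ + ‖(‖x‖⁻¹ - ‖y‖⁻¹) • y‖ := hsplit ▸ norm_add_le _ _
    _ ≤ ‖x - y‖ / ‖x‖ + ‖x - y‖ / ‖x‖ := by
        gcongr
        rw [norm_smul, norm_inv, norm_norm, inv_mul_eq_div]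
    _ = 2 * ‖x - y‖ / ‖x‖ := by ring

end NormedSpace

namespace EuclideanSpace

variable {ι : Type*} [Fintype ι]

theorem sum_abs_sq_sub_sq_le (a b : EuclideanSpace ℝ ι) :
    ∑ i, |a i ^ 2 - b i ^ 2| ≤ ‖a - b‖ * ‖a + b‖ := by
  calc ∑ i, |a i ^ 2 - b i ^ 2| = ∑ i, |a i - b i| * |a i + b i| := by
        simp only [sq_sub_sq, abs_mul, mul_comm]
    _ ≤ √(∑ i, |a i - b i| ^ 2) * √(∑ i, |a i + b i| ^ 2) :=
        Real.sum_mul_le_sqrt_mul_sqrt _ _ _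
    _ = ‖a - b‖ * ‖a + b‖ := by
        simp [EuclideanSpace.norm_eq, sq_abs]

end EuclideanSpace

section normVec

variable {ι E : Type*} [SeminormedAddCommGroup E]

noncomputable def normVec (v : ι → E) : EuclideanSpace ℝ ι :=
  WithLp.toLp 2 fun i => ‖v i‖

@[simp]
theorem normVec_apply (v : ι → E) (i : ι) : normVec v i = ‖v i‖ := rfl

variable [Fintype ι]

theorem norm_normVec (v : ι → E) : ‖normVec v‖ = ‖WithLp.toLp 2 v‖ := by
  simp [PiLp.norm_eq_of_L2]

theorem normVec_eq_zero_iff {F : Type*} [NormedAddCommGroup F] {v : ι → F} :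
    normVec v = 0 ↔ v = 0 := by
  rw [← norm_eq_zero, norm_normVec, norm_eq_zero, WithLp.toLp_eq_zero]

theorem norm_normVec_sub_normVec_le (v w : ι → E) :
    ‖normVec v - normVec w‖ ≤ ‖WithLp.toLp 2 (v - w)‖ := by
  simp only [PiLp.norm_eq_of_L2]
  gcongr with i
  simpa using abs_norm_sub_norm_le (v i) (w i)

end normVec

section

variable {n : Type*} [Fintype n]

theorem l2norm_eq_norm_toLp (v : n → ℂ) : l2norm v = ‖WithLp.toLp 2 v‖ := by
  simp [l2norm, PiLp.norm_eq_of_L2]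

theorem vecDist_eq_sq_normalize_normVec (v : n → ℂ) (i : n) :
    vecDist v i = NormedSpace.normalize (normVec v) i ^ 2 := by
  simp [vecDist, NormedSpace.normalize, norm_normVec, l2norm_eq_norm_toLp, div_eq_inv_mul,
    mul_pow]

end

theorem tv_dist_le_general {n : Type*} [Fintype n] (v w : n → ℂ) (hv : v ≠ 0) :
    tvDist v w ≤ 2 * l2norm (v - w) / l2norm v := by
  set a := NormedSpace.normalize (normVec v)
  set b := NormedSpace.normalize (normVec w)
  have hab : ‖a - b‖ ≤ 2 * l2norm (v - w) / l2norm v := by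
    calc ‖a - b‖ ≤ 2 * ‖normVec v - normVec w‖ / ‖normVec v‖ :=
          NormedSpace.norm_normalize_sub_normalize_le (normVec_eq_zero_iff.not.2 hv) _
      _ ≤ 2 * l2norm (v - w) / l2norm v := by
          rw [norm_normVec, l2norm_eq_norm_toLp, l2norm_eq_norm_toLp]
          gcongr
          exact norm_normVec_sub_normVec_le v w
  have hsum : ‖a + b‖ ≤ 2 := by
    linarith [norm_add_le a b, NormedSpace.norm_normalize_le_one (normVec v),
      NormedSpace.norm_normalize_le_one (normVec w)]
  calc tvDist v w = (1 / 2) * ∑ i, |a i ^ 2 - b i ^ 2| := by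
        simp only [tvDist, vecDist_eq_sq_normalize_normVec, a, b]
    _ ≤ (1 / 2) * (‖a - b‖ * ‖a + b‖) := by gcongr; exact EuclideanSpace.sum_abs_sq_sub_sq_le a b
    _ ≤ (1 / 2) * (‖a - b‖ * 2) := by gcongr
    _ = ‖a - b‖ := by ring
    _ ≤ 2 * l2norm (v - w) / l2norm v := hab

theorem tv_dist_le {n : Type*} [Fintype n] (v w : n → ℂ) (hv : v ≠ 0) (hw : w ≠ 0) :
    tvDist v w ≤ 2 * l2norm (v - w) / l2norm v :=
  tv_dist_le_general v w hv
end

section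
/- Let M ∈ ℂ^{m×n} and let f, g, h : ℝ_{≥0} → ℝ_{≥0} satisfy f(0) = g(0) = h(0) = 0 and h(σ) = f(σ)·g(σ) for every singular value σ of M. Then Φ_f(M) · Φ_g(M*) = Ψ_h(MM*), where Ψ_h denotes the corresponding transformation applied to the positive semi-definite matrix MM* (i.e., applying h to its eigenvalues). In particular, with h(x) = f(√x)/√x (for x > 0, h(0)=0), one has Φ_{inv}(M) · Φ_f(M*) = Φ_h(MM*). -/
/-!
Let `p` be a polynomial interpolating `h` at `0`, at the `σ i ^ 2` and at the `d i`. Both sides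
equal `p (M * Mᴴ)`. On the left, the product is `∑ h (σ i ^ 2) • uᵢ uᵢᴴ`, and since
`M * Mᴴ = ∑ σ i ^ 2 • uᵢ uᵢᴴ` with orthogonal idempotents `uᵢ uᵢᴴ`, any polynomial without
constant term evaluates there to `∑ p (σ i ^ 2) • uᵢ uᵢᴴ`. On the right,
`p (Q D Qᴴ) = Q p(D) Qᴴ` because conjugation by a unitary is an algebra automorphism.
-/

open Matrix Polynomial

section RankOne

variable {ι R l n o : Type*} [DecidableEq ι] [Fintype n] [CommSemiring R] [StarRing R]

theorem sum_smul_vecMulVec_mul_sum_smul_vecMulVec [Fintype ι] (u : ι → l → R) (v : ι → n → R)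
    (w : ι → o → R) (hv : ∀ i j, star (v i) ⬝ᵥ v j = if i = j then 1 else 0) (a b : ι → R) :
    (∑ i, a i • vecMulVec (u i) (star (v i))) * (∑ j, b j • vecMulVec (v j) (star (w j))) =
      ∑ i, (a i * b i) • vecMulVec (u i) (star (w i)) := by
  rw [Matrix.sum_mul]
  refine Finset.sum_congr rfl fun i _ => ?_
  rw [Matrix.mul_sum, Finset.sum_eq_single i]
  · simp [vecMulVec_mul_vecMulVec, hv, smul_smul, mul_comm]
  · intro j _ hji
    ext
    simp [vecMulVec_mul_vecMulVec, hv, Ne.symm hji, vecMulVec_apply]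
  · simp

theorem orthogonalIdempotents_vecMulVec_star [Fintype l] [DecidableEq l] (u : ι → l → R)
    (hu : ∀ i j, star (u i) ⬝ᵥ u j = if i = j then 1 else 0) :
    OrthogonalIdempotents fun i => vecMulVec (u i) (star (u i)) := by
  refine OrthogonalIdempotents.iff_mul_eq.2 fun i j => ?_
  rw [vecMulVec_mul_vecMulVec, hu]
  split_ifs with hij <;> simp [hij]

end RankOne

section Aeval

variable {ι R A : Type*} [CommSemiring R] [Semiring A] [Algebra R A]

theorem mul_aeval_of_mul_eq_smul {x e : A} {c : R} (h : e * x = c • e) (p : R[X]) :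
    e * aeval x p = p.eval c • e := by
  have hpow : ∀ k : ℕ, e * x ^ k = c ^ k • e := by
    intro k
    induction k with
    | zero => simp
    | succ k ih => rw [pow_succ, ← mul_assoc, ih, smul_mul_assoc, h, smul_smul, pow_succ]
  induction p using Polynomial.induction_on' with
  | add p q hp hq => rw [map_add, mul_add, hp, hq, eval_add, add_smul]
  | monomial k r =>
    rw [aeval_monomial, Algebra.commutes, ← mul_assoc, hpow, eval_monomial, smul_mul_assoc,
      ← Algebra.commutes, ← Algebra.smul_def, smul_smul, mul_comm]

theorem OrthogonalIdempotents.aeval_sum_smul [Fintype ι] {E : ι → A}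
    (hE : OrthogonalIdempotents E) (c : ι → R) {p : R[X]} (hp : p.eval 0 = 0) :
    aeval (∑ i, c i • E i) p = ∑ i, p.eval (c i) • E i := by
  classical
  obtain ⟨q, rfl⟩ : X ∣ p := X_dvd_iff.2 (by rwa [coeff_zero_eq_eval_zero])
  have hEx : ∀ j, E j * ∑ i, c i • E i = c j • E j := fun j => by
    simp [Finset.mul_sum, hE.mul_eq]
  rw [map_mul, aeval_X, Finset.sum_mul]
  refine Finset.sum_congr rfl fun i _ => ?_
  rw [smul_mul_assoc, mul_aeval_of_mul_eq_smul (hEx i), smul_smul, eval_mul, eval_X]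

theorem aeval_unitary_mul_mul_star [StarMul A] {u : A} (hu : u ∈ unitary A) (x : A) (p : R[X]) :
    aeval (u * x * star u) p = u * aeval x p * star u :=
  aeval_algHom_apply (Unitary.conjStarAlgAut R A ⟨u, hu⟩) x p

theorem Matrix.aeval_diagonal {n : Type*} [Fintype n] [DecidableEq n] (d : n → R) (p : R[X]) :
    aeval (diagonal d) p = diagonal fun i => p.eval (d i) := by
  rw [← diagonalAlgHom_apply R, aeval_algHom_apply, aeval_pi_apply]
  simp

end Aeval

theorem svt_mul_svt_eq_eigen_transform_general {m n k : ℕ}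
    (σ : Fin k → ℝ) (u : Fin k → Fin m → ℂ) (v : Fin k → Fin n → ℂ)
    (hu : ∀ i j, star (u i) ⬝ᵥ u j = if i = j then 1 else 0)
    (hv : ∀ i j, star (v i) ⬝ᵥ v j = if i = j then 1 else 0)
    (M : Matrix (Fin m) (Fin n) ℂ)
    (hM : M = ∑ i, ((σ i : ℝ) : ℂ) • vecMulVec (u i) (star (v i)))
    (f g h : ℝ → ℝ) (hh0 : h 0 = 0)
    (hfgh : ∀ i, h ((σ i) ^ 2) = f (σ i) * g (σ i))
    (Q : Matrix (Fin m) (Fin m) ℂ) (hQ1 : Q * Qᴴ = 1) (hQ2 : Qᴴ * Q = 1)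
    (d : Fin m → ℝ)
    (hMM : M * Mᴴ = Q * diagonal (fun i => ((d i : ℝ) : ℂ)) * Qᴴ) :
    (∑ i, ((f (σ i) : ℝ) : ℂ) • vecMulVec (u i) (star (v i))) *
        (∑ i, ((g (σ i) : ℝ) : ℂ) • vecMulVec (v i) (star (u i))) =
      Q * diagonal (fun i => ((h (d i) : ℝ) : ℂ)) * Qᴴ := by
  have hMMσ : M * Mᴴ = ∑ i, ((σ i ^ 2 : ℝ) : ℂ) • vecMulVec (u i) (star (u i)) := by
    rw [hM, conjTranspose_sum]
    simp only [conjTranspose_smul, conjTranspose_vecMulVec, star_star, Complex.star_def,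
      Complex.conj_ofReal]
    rw [sum_smul_vecMulVec_mul_sum_smul_vecMulVec u v u hv]
    push_cast
    simp only [sq]
  let s : Finset ℂ := insert 0 (Finset.univ.image (fun i => ((σ i ^ 2 : ℝ) : ℂ)) ∪
    Finset.univ.image fun i => ((d i : ℝ) : ℂ))
  obtain ⟨p, hp⟩ : ∃ p : ℂ[X], ∀ x ∈ s, p.eval x = ((h x.re : ℝ) : ℂ) :=
    ⟨Lagrange.interpolate s id _, fun _ hx =>
      Lagrange.eval_interpolate_at_node _ (Set.injOn_id _) hx⟩
  have hp0 : p.eval 0 = 0 := by simp [hp 0 (by simp [s]), hh0]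
  calc _ = ∑ i, ((f (σ i) * g (σ i) : ℝ) : ℂ) • vecMulVec (u i) (star (u i)) := by
        rw [sum_smul_vecMulVec_mul_sum_smul_vecMulVec u v u hv]
        push_cast
        rfl
    _ = ∑ i, p.eval ((σ i ^ 2 : ℝ) : ℂ) • vecMulVec (u i) (star (u i)) := by
        refine Finset.sum_congr rfl fun i _ => ?_
        rw [← hfgh, hp _ (by simp [s]), Complex.ofReal_re]
    _ = aeval (M * Mᴴ) p := by
        rw [hMMσ, (orthogonalIdempotents_vecMulVec_star u hu).aeval_sum_smul _ hp0]
    _ = Q * aeval (diagonal fun i => ((d i : ℝ) : ℂ)) p * Qᴴ := by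
        rw [hMM, ← star_eq_conjTranspose, aeval_unitary_mul_mul_star ⟨hQ2, hQ1⟩]
    _ = _ := by
        rw [aeval_diagonal]
        congr 3 with i
        rw [hp _ (by simp [s]), Complex.ofReal_re]

/-- Let `M = Σᵢ σᵢ uᵢ vᵢ*` be an SVD. Let `f, g, h : ℝ≥0 → ℝ≥0` vanish at `0` and satisfy
`h(σ²) = f(σ)·g(σ)` for every singular value `σ` of `M` (so that `h` applied to the
eigenvalues `σ²` of `MM*` matches `f·g` on singular values). Then
`Φ_f(M) · Φ_g(M*) = Ψ_h(MM*)`, where `Ψ_h` applies `h` to the eigenvalues of the positive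
semi-definite matrix `MM* = Q D Q*` (with `Q` unitary, `D` diagonal nonnegative). -/
theorem svt_mul_svt_eq_eigen_transform {m n k : ℕ}
    (σ : Fin k → ℝ) (u : Fin k → Fin m → ℂ) (v : Fin k → Fin n → ℂ)
    (hu : ∀ i j, star (u i) ⬝ᵥ u j = if i = j then 1 else 0)
    (hv : ∀ i j, star (v i) ⬝ᵥ v j = if i = j then 1 else 0)
    (hσ : ∀ i, 0 ≤ σ i)
    (M : Matrix (Fin m) (Fin n) ℂ)
    (hM : M = ∑ i, ((σ i : ℝ) : ℂ) • vecMulVec (u i) (star (v i)))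
    (f g h : ℝ → ℝ) (hf0 : f 0 = 0) (hg0 : g 0 = 0) (hh0 : h 0 = 0)
    (hfnn : ∀ x, 0 ≤ x → 0 ≤ f x) (hgnn : ∀ x, 0 ≤ x → 0 ≤ g x)
    (hhnn : ∀ x, 0 ≤ x → 0 ≤ h x)
    (hfgh : ∀ i, h ((σ i) ^ 2) = f (σ i) * g (σ i))
    (Q : Matrix (Fin m) (Fin m) ℂ) (hQ1 : Q * Qᴴ = 1) (hQ2 : Qᴴ * Q = 1)
    (d : Fin m → ℝ) (hd : ∀ i, 0 ≤ d i)
    (hMM : M * Mᴴ = Q * diagonal (fun i => ((d i : ℝ) : ℂ)) * Qᴴ) :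
    (∑ i, ((f (σ i) : ℝ) : ℂ) • vecMulVec (u i) (star (v i))) *
        (∑ i, ((g (σ i) : ℝ) : ℂ) • vecMulVec (v i) (star (u i))) =
      Q * diagonal (fun i => ((h (d i) : ℝ) : ℂ)) * Qᴴ :=
  svt_mul_svt_eq_eigen_transform_general σ u v hu hv M hM f g h hh0 hfgh Q hQ1 hQ2 d hMM
end

section
/- Let X, Y ∈ ℂ^{m×m} be positive semi-definite matrices and let S be the convex hull of the set of all nonzero eigenvalues of X and Y. Let g : ℝ_{≥0} → ℝ_{≥0} satisfy g(0) = 0 and be differentiable on S. Then ‖Φ_g(X) − Φ_g(Y)‖_F ≤ ‖X − Y‖_F · max_{σ ∈ S} ( |g'(σ)| + |g(σ)/σ| ). -/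
open Matrix

noncomputable def frobNorm {m n : Type*} [Fintype m] [Fintype n] (M : Matrix m n ℂ) : ℝ :=
  Real.sqrt (∑ i, ∑ j, ‖M i j‖ ^ 2)

/-! Conjugating by the unitaries `Qxᴴ` and `Qy` preserves the Frobenius norm and turns
`Φ_g(X) - Φ_g(Y)` and `X - Y` into the Hadamard products of `W = Qxᴴ Qy` with the matrices
`(g (dx i) - g (dy j))ᵢⱼ` and `(dx i - dy j)ᵢⱼ`. It therefore suffices that
`|g a - g b| ≤ C |a - b|` for all eigenvalues `a, b`: when both are nonzero this is the mean value
theorem on the convex hull, and when `b = 0` it is `|g a| = |g a / a| |a|`. -/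

section Frobenius

variable {m n : Type*} [Fintype m] [Fintype n]

lemma sum_norm_sq_eq_re_trace (A : Matrix m n ℂ) :
    ∑ i, ∑ j, ‖A i j‖ ^ 2 = (Aᴴ * A).trace.re := by
  simp only [trace, diag, mul_apply, conjTranspose_apply, Complex.re_sum]
  rw [Finset.sum_comm]
  refine Finset.sum_congr rfl fun i _ => Finset.sum_congr rfl fun j _ => ?_
  simp [Complex.mul_re, Complex.sq_norm, Complex.normSq_apply]

lemma frobNorm_le_mul_of_norm_le {A B : Matrix m n ℂ} {C : ℝ}
    (h : ∀ i j, ‖A i j‖ ≤ C * ‖B i j‖) : frobNorm A ≤ C * frobNorm B := by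
  rcases le_or_gt 0 C with hC | hC
  · unfold frobNorm
    rw [← Real.sqrt_sq hC, ← Real.sqrt_mul (sq_nonneg C), Finset.mul_sum]
    gcongr with i _
    rw [Finset.mul_sum]
    gcongr with j _
    rw [← mul_pow]
    exact pow_le_pow_left₀ (norm_nonneg _) (h i j) 2
  · have hB : ∀ i j, ‖B i j‖ = 0 := fun i j => by
      nlinarith [h i j, norm_nonneg (A i j), norm_nonneg (B i j)]
    have hA : ∀ i j, ‖A i j‖ = 0 := fun i j =>
      le_antisymm ((h i j).trans (by rw [hB i j, mul_zero])) (norm_nonneg _)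
    simp [frobNorm, hA, hB]

variable [DecidableEq m] [DecidableEq n]

lemma frobNorm_unitary_mul_mul {U : Matrix m m ℂ} {V : Matrix n n ℂ}
    (hU : U ∈ unitaryGroup m ℂ) (hV : V ∈ unitaryGroup n ℂ) (M : Matrix m n ℂ) :
    frobNorm (U * M * V) = frobNorm M := by
  have hU' : Uᴴ * U = 1 := Unitary.star_mul_self_of_mem hU
  have hV' : V * Vᴴ = 1 := Unitary.mul_star_self_of_mem hV
  have hconj : (U * M * V)ᴴ * (U * M * V) = Vᴴ * (Mᴴ * M * V) := by
    simp only [conjTranspose_mul, Matrix.mul_assoc, ← Matrix.mul_assoc Uᴴ U, hU', Matrix.one_mul]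
  unfold frobNorm
  rw [sum_norm_sq_eq_re_trace, sum_norm_sq_eq_re_trace, hconj, trace_mul_comm, Matrix.mul_assoc,
    hV', Matrix.mul_one]

end Frobenius

lemma conjTranspose_mul_sub_mul_eq_hadamard {n α : Type*} [Fintype n] [DecidableEq n]
    [CommRing α] [StarRing α] {U V : Matrix n n α} (hU : U ∈ unitaryGroup n α)
    (hV : V ∈ unitaryGroup n α) (f h : n → α) :
    Uᴴ * (U * diagonal f * Uᴴ - V * diagonal h * Vᴴ) * V =
      (of fun i j => f i - h j) ⊙ (Uᴴ * V) := by
  have hU' : Uᴴ * U = 1 := Unitary.star_mul_self_of_mem hU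
  have hV' : Vᴴ * V = 1 := Unitary.star_mul_self_of_mem hV
  have hf : Uᴴ * (U * diagonal f * Uᴴ) * V = diagonal f * (Uᴴ * V) := by
    simp only [Matrix.mul_assoc, ← Matrix.mul_assoc Uᴴ U, hU', Matrix.one_mul]
  have hh : Uᴴ * (V * diagonal h * Vᴴ) * V = Uᴴ * V * diagonal h := by
    simp only [Matrix.mul_assoc, hV', Matrix.mul_one]
  ext i j
  rw [Matrix.mul_sub, Matrix.sub_mul, hf, hh, Matrix.sub_apply, diagonal_mul, mul_diagonal,
    hadamard_apply, of_apply]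
  ring

lemma abs_sub_le_of_abs_deriv_add_abs_div_le {g : ℝ → ℝ} (hg0 : g 0 = 0) {s : Set ℝ} {C : ℝ}
    (hdiff : ∀ x ∈ convexHull ℝ (s \ {0}), DifferentiableAt ℝ g x)
    (hC : ∀ x ∈ convexHull ℝ (s \ {0}), |deriv g x| + |g x / x| ≤ C)
    {a b : ℝ} (ha : a ∈ s) (hb : b ∈ s) :
    |g a - g b| ≤ C * |a - b| := by
  have mem_hull : ∀ x ∈ s, x ≠ 0 → x ∈ convexHull ℝ (s \ {0}) :=
    fun x hx hx0 => subset_convexHull ℝ _ ⟨hx, hx0⟩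
  have sub_zero_le : ∀ x ∈ s, |g x - g 0| ≤ C * |x - 0| := by
    intro x hx
    rcases eq_or_ne x 0 with rfl | hx0
    · simp
    have hCx := hC x (mem_hull x hx hx0)
    rw [hg0, sub_zero, sub_zero, ← div_mul_cancel₀ (g x) hx0, abs_mul]
    exact mul_le_mul_of_nonneg_right (by linarith [abs_nonneg (deriv g x)]) (abs_nonneg x)
  rcases eq_or_ne a 0 with rfl | ha0
  · rw [abs_sub_comm, abs_sub_comm 0]
    exact sub_zero_le b hb
  rcases eq_or_ne b 0 with rfl | hb0
  · exact sub_zero_le a ha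
  simpa only [Real.norm_eq_abs] using (convex_convexHull ℝ _).norm_image_sub_le_of_norm_deriv_le
    hdiff (fun x hx => by rw [Real.norm_eq_abs]; linarith [hC x hx, abs_nonneg (g x / x)])
    (mem_hull b hb hb0) (mem_hull a ha ha0)

theorem svt_dist_le_general {m : ℕ}
    (X Y : Matrix (Fin m) (Fin m) ℂ)
    (Qx Qy : Matrix (Fin m) (Fin m) ℂ)
    (hQx2 : Qxᴴ * Qx = 1) (hQy2 : Qyᴴ * Qy = 1)
    (dx dy : Fin m → ℝ)
    (hX : X = Qx * diagonal (fun i => ((dx i : ℝ) : ℂ)) * Qxᴴ)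
    (hY : Y = Qy * diagonal (fun i => ((dy i : ℝ) : ℂ)) * Qyᴴ)
    (g : ℝ → ℝ) (hg0 : g 0 = 0)
    (hdiff : ∀ x ∈ convexHull ℝ ((Set.range dx ∪ Set.range dy) \ {0}),
      DifferentiableAt ℝ g x)
    (C : ℝ)
    (hC : ∀ x ∈ convexHull ℝ ((Set.range dx ∪ Set.range dy) \ {0}),
      |deriv g x| + |g x / x| ≤ C) :
    frobNorm (Qx * diagonal (fun i => ((g (dx i) : ℝ) : ℂ)) * Qxᴴ -
        Qy * diagonal (fun i => ((g (dy i) : ℝ) : ℂ)) * Qyᴴ) ≤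
      frobNorm (X - Y) * C := by
  have hUx : Qx ∈ unitaryGroup (Fin m) ℂ := mem_unitaryGroup_iff'.2 hQx2
  have hUy : Qy ∈ unitaryGroup (Fin m) ℂ := mem_unitaryGroup_iff'.2 hQy2
  have hlip : ∀ i j, |g (dx i) - g (dy j)| ≤ C * |dx i - dy j| := fun i j =>
    abs_sub_le_of_abs_deriv_add_abs_div_le hg0 hdiff hC (Or.inl ⟨i, rfl⟩) (Or.inr ⟨j, rfl⟩)
  rw [← frobNorm_unitary_mul_mul (Unitary.star_mem hUx) hUy (X - Y),
    ← frobNorm_unitary_mul_mul (Unitary.star_mem hUx) hUy, hX, hY, star_eq_conjTranspose,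
    conjTranspose_mul_sub_mul_eq_hadamard hUx hUy, conjTranspose_mul_sub_mul_eq_hadamard hUx hUy,
    mul_comm]
  refine frobNorm_le_mul_of_norm_le fun i j => ?_
  simp only [hadamard_apply, of_apply, norm_mul, ← Complex.ofReal_sub, Complex.norm_real,
    Real.norm_eq_abs, ← mul_assoc]
  exact mul_le_mul_of_nonneg_right (hlip i j) (norm_nonneg _)

/-- Bound on the distance between singular value transformations of two positive
semi-definite matrices `X = Qx D_x Qx*` and `Y = Qy D_y Qy*`: if `g(0) = 0` and `g` is
differentiable on the convex hull `S` of the nonzero eigenvalues, then for any `C` bounding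
`|g'(σ)| + |g(σ)/σ|` on `S`,
`‖Φ_g(X) − Φ_g(Y)‖_F ≤ ‖X − Y‖_F · C`. -/
theorem svt_dist_le {m : ℕ}
    (X Y : Matrix (Fin m) (Fin m) ℂ)
    (Qx Qy : Matrix (Fin m) (Fin m) ℂ)
    (hQx1 : Qx * Qxᴴ = 1) (hQx2 : Qxᴴ * Qx = 1)
    (hQy1 : Qy * Qyᴴ = 1) (hQy2 : Qyᴴ * Qy = 1)
    (dx dy : Fin m → ℝ) (hdx : ∀ i, 0 ≤ dx i) (hdy : ∀ i, 0 ≤ dy i)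
    (hX : X = Qx * diagonal (fun i => ((dx i : ℝ) : ℂ)) * Qxᴴ)
    (hY : Y = Qy * diagonal (fun i => ((dy i : ℝ) : ℂ)) * Qyᴴ)
    (g : ℝ → ℝ) (hg0 : g 0 = 0) (hgnn : ∀ x, 0 ≤ x → 0 ≤ g x)
    (hdiff : ∀ x ∈ convexHull ℝ ((Set.range dx ∪ Set.range dy) \ {0}),
      DifferentiableAt ℝ g x)
    (C : ℝ)
    (hC : ∀ x ∈ convexHull ℝ ((Set.range dx ∪ Set.range dy) \ {0}),
      |deriv g x| + |g x / x| ≤ C) :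
    frobNorm (Qx * diagonal (fun i => ((g (dx i) : ℝ) : ℂ)) * Qxᴴ -
        Qy * diagonal (fun i => ((g (dy i) : ℝ) : ℂ)) * Qyᴴ) ≤
      frobNorm (X - Y) * C :=
  svt_dist_le_general X Y Qx Qy hQx2 hQy2 dx dy hX hY g hg0 hdiff C hC
end

section
/- Let A ∈ ℂ^{m×n} with largest singular value σ_max(A) = ‖A‖ and smallest nonzero singular value σ_min(A) = ‖A‖/κ₂ (κ₂ ≥ 1), and let f, h be as follows: f : ℝ_{≥0} → ℝ_{≥0} with f(0) = 0, differentiable on the interval L = [‖A‖/(√2 κ₂), (‖A‖/(√2 κ₂))·√(2κ₂² + 1)], and h(x) = f(√x)/√x for x > 0, h(0) = 0. Then for every x in the interval Q = [‖A‖²/(2κ₂²), (‖A‖²/(2κ₂²))(2κ₂² + 1)], |h'(x)| + |h(x)/x| ≤ (κ₂/‖A‖)² · ( φ + 3√2 Ω κ₂/‖A‖ ), where Ω = max_{σ ∈ L} f(σ) and φ = max_{σ ∈ L} |f'(σ)|. -/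
open Matrix

/-- The spectral (operator) norm of a matrix (its largest singular value). -/
noncomputable def specNorm {m n : Type*} [Fintype m] [Fintype n] (M : Matrix m n ℂ) : ℝ :=
  sSup ((fun v : n → ℂ => l2norm (M.mulVec v)) '' {v : n → ℂ | l2norm v ≤ 1})

/-- The smallest nonzero singular value of `M`. -/
noncomputable def sigMinNZ {m n : ℕ} (M : Matrix (Fin m) (Fin n) ℂ) : ℝ :=
  sInf {x : ℝ | 0 < x ∧
    x ^ 2 ∈ Set.range (Matrix.isHermitian_conjTranspose_mul_self M).eigenvalues}

/-!
On `Q` we have `√x ∈ L`, and `h(y) = f(√y)/√y` near `x`, so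
`h'(x) = (f'(√x) - f(√x)/√x) / (2x)` and `h(x)/x = f(√x)/x^{3/2}`.
With `t = 1/√x ≤ √2 κ / a` this gives `|h'(x)| + |h(x)/x| ≤ φ t²/2 + (3/2) Ω t³`,
which is the claimed bound at `t = √2 κ / a`.
-/

open Real Set

lemma sqrt_mem_Icc_of_mem_Icc_sq {l c x : ℝ} (hl : 0 ≤ l) (hx : x ∈ Icc (l ^ 2) (l ^ 2 * c)) :
    √x ∈ Icc l (l * √c) := by
  constructor
  · simpa [sqrt_sq hl] using sqrt_le_sqrt hx.1
  · simpa [sqrt_mul (sq_nonneg l), sqrt_sq hl] using sqrt_le_sqrt hx.2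

lemma hasDerivAt_comp_sqrt_div_sqrt {f : ℝ → ℝ} {f' x : ℝ} (hx : 0 < x)
    (hf : HasDerivAt f f' √x) :
    HasDerivAt (fun y => f √y / √y) ((f' - f √x / √x) / (2 * x)) x := by
  have hs : √x ≠ 0 := (sqrt_pos.2 hx).ne'
  refine ((hf.comp x (hasDerivAt_sqrt hx.ne')).div (hasDerivAt_sqrt hx.ne') hs).congr_deriv ?_
  rw [sq_sqrt hx.le, Function.comp_apply]
  field_simp

lemma abs_div_add_abs_div_le {l x d v φ Ω : ℝ} (hl : 0 < l) (hlx : l ≤ √x)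
    (hd : |d| ≤ φ) (hv : 0 ≤ v) (hvΩ : v ≤ Ω) :
    |(d - v / √x) / (2 * x)| + |v / √x / x| ≤ φ / (2 * l ^ 2) + 3 * Ω / (2 * l ^ 3) := by
  have hs : 0 < √x := hl.trans_le hlx
  have hx : √x ^ 2 = x := sq_sqrt (sqrt_pos.1 hs).le
  generalize √x = s at *
  subst hx
  have hinv : s⁻¹ ≤ l⁻¹ := inv_anti₀ hl hlx
  have hφ : 0 ≤ φ := (abs_nonneg d).trans hd
  have hΩ : 0 ≤ Ω := hv.trans hvΩ
  calc _ ≤ (|d| + v / s) / (2 * s ^ 2) + v / s / s ^ 2 := by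
        rw [abs_div, abs_of_pos (by positivity : (0 : ℝ) < 2 * s ^ 2),
          abs_of_nonneg (by positivity : 0 ≤ v / s / s ^ 2)]
        gcongr
        exact (abs_sub _ _).trans_eq (by rw [abs_of_nonneg (div_nonneg hv hs.le)])
    _ = |d| * s⁻¹ ^ 2 / 2 + 3 / 2 * v * s⁻¹ ^ 3 := by field_simp; ring
    _ ≤ φ * l⁻¹ ^ 2 / 2 + 3 / 2 * Ω * l⁻¹ ^ 3 := by gcongr
    _ = _ := by field_simp

theorem h_derivative_bound_general
    (a κ : ℝ) (ha0 : 0 < a) (hκ1 : 1 ≤ κ)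
    (f h : ℝ → ℝ) (hfnn : ∀ x, 0 ≤ x → 0 ≤ f x)
    (hh : ∀ x > (0 : ℝ), h x = f (Real.sqrt x) / Real.sqrt x)
    (hdiff : ∀ σ ∈ Set.Icc (a / (Real.sqrt 2 * κ))
        (a / (Real.sqrt 2 * κ) * Real.sqrt (2 * κ ^ 2 + 1)), DifferentiableAt ℝ f σ)
    (Ω φ : ℝ)
    (hΩ : ∀ σ ∈ Set.Icc (a / (Real.sqrt 2 * κ))
        (a / (Real.sqrt 2 * κ) * Real.sqrt (2 * κ ^ 2 + 1)), f σ ≤ Ω)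
    (hφ : ∀ σ ∈ Set.Icc (a / (Real.sqrt 2 * κ))
        (a / (Real.sqrt 2 * κ) * Real.sqrt (2 * κ ^ 2 + 1)), |deriv f σ| ≤ φ) :
    ∀ x ∈ Set.Icc (a ^ 2 / (2 * κ ^ 2)) (a ^ 2 / (2 * κ ^ 2) * (2 * κ ^ 2 + 1)),
      |deriv h x| + |h x / x| ≤
        (κ / a) ^ 2 * (φ + 3 * Real.sqrt 2 * Ω * κ / a) := by
  intro x hx
  have hκ0 : 0 < κ := one_pos.trans_le hκ1
  set l := a / (√2 * κ) with hl
  have hl0 : 0 < l := by positivity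
  have hl_sq : l ^ 2 = a ^ 2 / (2 * κ ^ 2) := by
    rw [hl, div_pow, mul_pow, sq_sqrt zero_le_two]
  rw [← hl_sq] at hx
  have hx0 : 0 < x := (pow_pos hl0 2).trans_le hx.1
  have hsL := sqrt_mem_Icc_of_mem_Icc_sq hl0.le hx
  have hh_eq : h =ᶠ[nhds x] fun y => f √y / √y :=
    eventually_gt_nhds hx0 |>.mono hh
  rw [((hasDerivAt_comp_sqrt_div_sqrt hx0 (hdiff _ hsL).hasDerivAt).congr_of_eventuallyEq
    hh_eq).deriv, hh x hx0]
  calc _ ≤ φ / (2 * l ^ 2) + 3 * Ω / (2 * l ^ 3) :=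
        abs_div_add_abs_div_le hl0 hsL.1 (hφ _ hsL) (hfnn _ (sqrt_nonneg x)) (hΩ _ hsL)
    _ = _ := by
        have h3 : √2 ^ 3 = 2 * √2 := by rw [pow_succ, sq_sqrt zero_le_two]
        rw [hl, div_pow, div_pow, mul_pow, mul_pow, sq_sqrt zero_le_two, h3]
        field_simp

/-- Bound on `|h'| + |h(x)/x|` on the interval `Q`, where `h(x) = f(√x)/√x`, `h(0) = 0`,
`a = ‖A‖` is the largest singular value of `A`, `κ = ‖A‖/σ_min(A)` is its condition number,
`L = [a/(√2κ), (a/(√2κ))√(2κ²+1)]`, `Q = [a²/(2κ²), (a²/(2κ²))(2κ²+1)]`,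
`Ω ≥ max_{σ∈L} f(σ)` and `φ ≥ max_{σ∈L} |f'(σ)|`. -/
theorem h_derivative_bound {m n : ℕ}
    (A : Matrix (Fin m) (Fin n) ℂ) (hA : A ≠ 0)
    (a κ : ℝ) (ha : a = specNorm A) (ha0 : 0 < a)
    (hκ : κ = specNorm A / sigMinNZ A) (hκ1 : 1 ≤ κ)
    (f h : ℝ → ℝ) (hf0 : f 0 = 0) (hfnn : ∀ x, 0 ≤ x → 0 ≤ f x)
    (hh0 : h 0 = 0) (hh : ∀ x > (0 : ℝ), h x = f (Real.sqrt x) / Real.sqrt x)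
    (hdiff : ∀ σ ∈ Set.Icc (a / (Real.sqrt 2 * κ))
        (a / (Real.sqrt 2 * κ) * Real.sqrt (2 * κ ^ 2 + 1)), DifferentiableAt ℝ f σ)
    (Ω φ : ℝ)
    (hΩ : ∀ σ ∈ Set.Icc (a / (Real.sqrt 2 * κ))
        (a / (Real.sqrt 2 * κ) * Real.sqrt (2 * κ ^ 2 + 1)), f σ ≤ Ω)
    (hφ : ∀ σ ∈ Set.Icc (a / (Real.sqrt 2 * κ))
        (a / (Real.sqrt 2 * κ) * Real.sqrt (2 * κ ^ 2 + 1)), |deriv f σ| ≤ φ) :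
    ∀ x ∈ Set.Icc (a ^ 2 / (2 * κ ^ 2)) (a ^ 2 / (2 * κ ^ 2) * (2 * κ ^ 2 + 1)),
      |deriv h x| + |h x / x| ≤
        (κ / a) ^ 2 * (φ + 3 * Real.sqrt 2 * Ω * κ / a) :=
  h_derivative_bound_general a κ ha0 hκ1 f h hfnn hh hdiff Ω φ hΩ hφ
end
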